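/- A permutation π of length n ≥ 2 contains the mesh pattern (12, {(0,0),(0,1),(0,2),(2,0),(2,1),(2,2)}) if and only if π(1) < π(n), i.e. its first letter is smaller than its last. Consequently, exactly half of the permutations of length n contain this pattern, so the number of permutations of length n avoiding it is n!/2 for all n ≥ 2. -/

import Mathlib

/-- 1-based position boundaries of an occurrence: `posOf x 0 = 0`,
`posOf x i = x_i` (1-based) for `1 ≤ i ≤ k`, and `posOf x i = n+1` for `i > k`. -/
def posOf {k n : ℕ} (x : Fin k → Fin n) (i : ℕ) : ℕ :=
  if h : 1 ≤ i ∧ i ≤ k then (x ⟨i - 1, by omega⟩ : ℕ) + 1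
  else if i = 0 then 0 else n + 1

/-- 1-based value boundaries of an occurrence: `valOf τ x π 0 = 0`,
`valOf τ x π j = y_j`, the `j`-th smallest of the values `π(x_1),…,π(x_k)`
(which equals `π(x_{τ⁻¹(j)})` for an occurrence of the classical pattern `τ`),
and `n+1` for `j > k`. -/
def valOf {k n : ℕ} (τ : Equiv.Perm (Fin k)) (x : Fin k → Fin n)
    (π : Equiv.Perm (Fin n)) (j : ℕ) : ℕ :=
  if h : 1 ≤ j ∧ j ≤ k then (π (x (τ.symm ⟨j - 1, by omega⟩)) : ℕ) + 1
  else if j = 0 then 0 else n + 1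

/-- `π` (a permutation of length `n`, 0-indexed via `Fin n`) contains the mesh
pattern `(τ, R)`, where boxes in `R` are given with 0-based coordinates in `[0,k]²`.
All positions/values are converted to 1-based via `+1`. -/
def MeshOccursIn {k n : ℕ} (τ : Equiv.Perm (Fin k)) (R : Set (ℕ × ℕ))
    (π : Equiv.Perm (Fin n)) : Prop :=
  ∃ x : Fin k → Fin n, StrictMono x ∧
    (∀ a b : Fin k, π (x a) < π (x b) ↔ τ a < τ b) ∧
    ∀ r ∈ R, ∀ z : Fin n,
      ¬ (posOf x r.1 < (z : ℕ) + 1 ∧ (z : ℕ) + 1 < posOf x (r.1 + 1) ∧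
         valOf τ x π r.2 < (π z : ℕ) + 1 ∧ (π z : ℕ) + 1 < valOf τ x π (r.2 + 1))

/-- `π` avoids the mesh pattern `(τ, R)`. -/
def MeshAvoids {k n : ℕ} (τ : Equiv.Perm (Fin k)) (R : Set (ℕ × ℕ))
    (π : Equiv.Perm (Fin n)) : Prop := ¬ MeshOccursIn τ R π


/-!
The six shaded boxes fill the whole region to the left of the first point and to the right of
the second point of an occurrence, so an occurrence must use the first and the last letter of
`π`; conversely these two letters form an occurrence as soon as `π 1 < π n`. Composing with the
transposition of the first and last positions swaps the permutations with `π 1 < π n` and those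
with `π 1 > π n`, so each class has `n! / 2` elements.
-/

open Equiv

section HalfOfPermutations

variable {α : Type*} [LinearOrder α] {i j : α}

lemma card_perm_apply_lt_eq_card_not (hij : i ≠ j) :
    Nat.card {σ : Perm α // σ i < σ j} = Nat.card {σ : Perm α // ¬ σ i < σ j} :=
  Nat.card_congr <| (Equiv.mulRight (swap i j)).subtypeEquiv fun σ => by
    simpa using (show σ i ≠ σ j from σ.injective.ne hij).le_iff_lt.symm

lemma two_mul_card_perm_apply_lt [Finite α] (hij : i ≠ j) :
    2 * Nat.card {σ : Perm α // σ i < σ j} = (Nat.card α).factorial := by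
  classical
  rw [← Nat.card_perm, ← Nat.card_congr (sumCompl fun σ : Perm α => σ i < σ j), Nat.card_sum,
    ← card_perm_apply_lt_eq_card_not hij, two_mul]

end HalfOfPermutations

section Pattern12

variable {n : ℕ} (π : Perm (Fin n)) (x : Fin 2 → Fin n)

@[simp] lemma posOf_zero : posOf x 0 = 0 := by simp [posOf]
@[simp] lemma posOf_one : posOf x 1 = (x 0 : ℕ) + 1 := by simp [posOf]
@[simp] lemma posOf_two : posOf x 2 = (x 1 : ℕ) + 1 := by simp [posOf]
@[simp] lemma posOf_three : posOf x 3 = n + 1 := by simp [posOf]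

@[simp] lemma valOf_one_zero : valOf 1 x π 0 = 0 := by simp [valOf]
@[simp] lemma valOf_one_one : valOf 1 x π 1 = (π (x 0) : ℕ) + 1 := by simp [valOf]; rfl
@[simp] lemma valOf_one_two : valOf 1 x π 2 = (π (x 1) : ℕ) + 1 := by simp [valOf]; rfl
@[simp] lemma valOf_one_three : valOf 1 x π 3 = n + 1 := by simp [valOf]

lemma exists_valOf_lt_lt (hx : π (x 0) < π (x 1)) {z : Fin n} (h0 : z ≠ x 0) (h1 : z ≠ x 1) :
    ∃ j ≤ 2, valOf 1 x π j < (π z : ℕ) + 1 ∧ (π z : ℕ) + 1 < valOf 1 x π (j + 1) := by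
  have h0' : (π z : ℕ) ≠ π (x 0) := Fin.val_ne_of_ne (π.injective.ne h0)
  have h1' : (π z : ℕ) ≠ π (x 1) := Fin.val_ne_of_ne (π.injective.ne h1)
  have hlt : (π (x 0) : ℕ) < π (x 1) := hx
  have hz := (π z).isLt
  by_cases hz0 : (π z : ℕ) < π (x 0)
  · exact ⟨0, by simp; omega⟩
  by_cases hz1 : (π z : ℕ) < π (x 1)
  · exact ⟨1, by simp; omega⟩
  · exact ⟨2, by simp; omega⟩

lemma notMem_column_of_shaded {R : Set (ℕ × ℕ)} {i : ℕ} (hR : ∀ j ≤ 2, (i, j) ∈ R)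
    (hx : π (x 0) < π (x 1))
    (hbox : ∀ r ∈ R, ∀ z : Fin n,
      ¬ (posOf x r.1 < (z : ℕ) + 1 ∧ (z : ℕ) + 1 < posOf x (r.1 + 1) ∧
         valOf 1 x π r.2 < (π z : ℕ) + 1 ∧ (π z : ℕ) + 1 < valOf 1 x π (r.2 + 1)))
    {z : Fin n} (h0 : z ≠ x 0) (h1 : z ≠ x 1) :
    ¬ (posOf x i < (z : ℕ) + 1 ∧ (z : ℕ) + 1 < posOf x (i + 1)) := fun hpos => by
  obtain ⟨j, hj, hlow, hhigh⟩ := exists_valOf_lt_lt π x hx h0 h1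
  exact hbox (i, j) (hR j hj) z ⟨hpos.1, hpos.2, hlow, hhigh⟩

theorem meshOccursIn_iff_apply_first_lt_apply_last (hn : 0 < n) :
    MeshOccursIn (1 : Perm (Fin 2)) {(0,0),(0,1),(0,2),(2,0),(2,1),(2,2)} π ↔
      π ⟨0, hn⟩ < π ⟨n - 1, by omega⟩ := by
  constructor
  · rintro ⟨x, hmono, hpat, hbox⟩
    have hx : π (x 0) < π (x 1) := by simpa using hpat 0 1
    have hx01 : x 0 < x 1 := hmono (by decide)
    have hfirst : x 0 = ⟨0, hn⟩ := by
      by_contra h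
      have hz : (⟨0, hn⟩ : Fin n) < x 0 := Fin.lt_def.2 (by grind)
      refine notMem_column_of_shaded π x (i := 0) (by grind) hx hbox hz.ne
        (hz.trans hx01).ne ?_
      simp; grind
    have hlast : x 1 = ⟨n - 1, by omega⟩ := by
      by_contra h
      have hz : x 1 < (⟨n - 1, by omega⟩ : Fin n) := Fin.lt_def.2 (by grind)
      refine notMem_column_of_shaded π x (i := 2) (by grind) hx hbox (hx01.trans hz).ne'
        hz.ne' ?_
      simp; omega
    rwa [hfirst, hlast] at hx
  · intro h
    have hlast : 0 < n - 1 := by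
      by_contra h'
      exact h.ne (congrArg π (Fin.ext (by simp; omega)))
    refine ⟨![⟨0, hn⟩, ⟨n - 1, by omega⟩], Fin.strictMono_iff_lt_succ.2 ?_, ?_, ?_⟩
    · intro a; fin_cases a; exact Fin.lt_def.2 hlast
    · intro a b
      fin_cases a <;> fin_cases b <;> simp [h, h.not_gt]
    · rintro _ (rfl | rfl | rfl | rfl | rfl | rfl) z <;> simp <;> omega

end Pattern12

/-- For `n ≥ 2`, a permutation contains
`(12, {(0,0),(0,1),(0,2),(2,0),(2,1),(2,2)})` iff its first letter is smaller
than its last; exactly half the permutations contain it, so `n!/2` avoid it. -/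
theorem stmt7 (n : ℕ) (hn : 2 ≤ n) :
    (∀ π : Equiv.Perm (Fin n),
      MeshOccursIn (1 : Equiv.Perm (Fin 2)) {(0,0),(0,1),(0,2),(2,0),(2,1),(2,2)} π ↔
        π ⟨0, by omega⟩ < π ⟨n - 1, by omega⟩) ∧
    2 * Nat.card {π : Equiv.Perm (Fin n) //
        MeshOccursIn (1 : Equiv.Perm (Fin 2)) {(0,0),(0,1),(0,2),(2,0),(2,1),(2,2)} π} =
      n.factorial ∧
    Nat.card {π : Equiv.Perm (Fin n) //
        MeshAvoids (1 : Equiv.Perm (Fin 2)) {(0,0),(0,1),(0,2),(2,0),(2,1),(2,2)} π} =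
      n.factorial / 2 := by
  have hocc := fun π => meshOccursIn_iff_apply_first_lt_apply_last π (n := n) (by omega)
  have hne : (⟨0, by omega⟩ : Fin n) ≠ ⟨n - 1, by omega⟩ := by
    simp only [ne_eq, Fin.mk.injEq]; omega
  have hhalf := two_mul_card_perm_apply_lt hne
  have hcompl := card_perm_apply_lt_eq_card_not hne
  rw [Nat.card_fin] at hhalf
  refine ⟨hocc, ?_, ?_⟩
  · rwa [Nat.card_congr (subtypeEquivRight hocc)]
  · unfold MeshAvoids
    rw [Nat.card_congr (subtypeEquivRight fun π => (hocc π).not), ← hcompl]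
    omega
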